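/- arXiv:2509.06320 — 3 statements merged into one kernel-verified Lean document; each statement's English description precedes it below -/
import Mathlib

section
/- For an odd positive integer n, the smallest positive integer λ such that (2n(n²+4)/(n²+n+4))·λ is an integer is λ = (n²+n+4)/2, and for this λ the value equals n(n²+4). -/
/-!
Write `n² + n + 4 = 2m`, which is possible because `n² + n` is even. The quantity is then
`n(n² + 4)λ / m`. For odd `n`, both `n` and `n² + 4` are coprime to `n² + n + 4` (each gcd
reduces to `gcd(n, 4) = 1`), so `m` must divide `λ`, and `λ = m` gives the value `n(n² + 4)`.
-/

namespace Nat

lemma coprime_sq_add_add_of_coprime {n c : ℕ} (h : n.Coprime c) :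
    n.Coprime (n ^ 2 + n + c) := by
  have : n.Coprime (c + n * (n + 1)) := (coprime_add_mul_left_right n c (n + 1)).mpr h
  convert this using 1
  ring

lemma coprime_sq_add_sq_add_add_of_coprime {n c : ℕ} (h : n.Coprime c) :
    (n ^ 2 + c).Coprime (n ^ 2 + n + c) := by
  have hsq : (n ^ 2 + c).Coprime n := by
    have : n.Coprime (c + n * n) := (coprime_add_mul_left_right n c n).mpr h
    rw [coprime_comm]
    convert this using 1
    ring
  have : (n ^ 2 + c).Coprime (n + (n ^ 2 + c)) := coprime_add_self_right.mpr hsq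
  convert this using 1
  ring

lemma coprime_mul_sq_add_of_coprime {n c : ℕ} (h : n.Coprime c) :
    (n * (n ^ 2 + c)).Coprime (n ^ 2 + n + c) :=
  (coprime_sq_add_add_of_coprime h).mul_left (coprime_sq_add_sq_add_add_of_coprime h)

end Nat

lemma Odd.coprime_four {n : ℕ} (hn : Odd n) : n.Coprime 4 := by
  simpa using hn.coprime_two_right.pow_right 2

lemma isLeast_pos_mul_div_eq_intCast {a b : ℕ} (hb : 0 < b) (hab : a.Coprime b) :
    IsLeast {l : ℕ | 0 < l ∧ ∃ k : ℤ, (a * l : ℚ) / b = k} b := by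
  have hb' : (b : ℚ) ≠ 0 := by positivity
  refine ⟨⟨hb, a, by push_cast; field_simp⟩, ?_⟩
  rintro l ⟨hl, k, hk⟩
  rw [div_eq_iff hb'] at hk
  have hdvd : (b : ℤ) ∣ ((a * l : ℕ) : ℤ) :=
    ⟨k, by push_cast; exact_mod_cast hk.trans (mul_comm _ _)⟩
  exact Nat.le_of_dvd hl (hab.symm.dvd_of_dvd_mul_left (Int.natCast_dvd_natCast.mp hdvd))

theorem stmt_3_general (n : ℕ) (hodd : Odd n) :
    IsLeast {l : ℕ | 0 < l ∧ ∃ k : ℤ,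
        ((2 * n * (n ^ 2 + 4) * l : ℚ) / (n ^ 2 + n + 4)) = (k : ℚ)}
      ((n ^ 2 + n + 4) / 2) ∧
    (2 * n * (n ^ 2 + 4) * (((n ^ 2 + n + 4) / 2 : ℕ) : ℚ)) / (n ^ 2 + n + 4)
      = n * (n ^ 2 + 4) := by
  set m := (n ^ 2 + n + 4) / 2
  have hm_nat : 2 * m = n ^ 2 + n + 4 := by
    refine Nat.two_mul_div_two_of_even ?_
    simpa [sq, mul_add] using (Nat.even_mul_succ_self n).add (even_two_mul 2)
  have hm : (n ^ 2 + n + 4 : ℚ) = 2 * m := by exact_mod_cast hm_nat.symm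
  have hm0 : (m : ℚ) ≠ 0 := by
    have : 0 < m := by omega
    positivity
  have hquot (l : ℚ) : (2 * n * (n ^ 2 + 4) * l) / (n ^ 2 + n + 4)
      = ((n * (n ^ 2 + 4) : ℕ) * l : ℚ) / m := by
    rw [hm]; push_cast; field_simp
  simp only [hquot]
  have hcop : (n * (n ^ 2 + 4)).Coprime m :=
    (Nat.coprime_mul_sq_add_of_coprime hodd.coprime_four).coprime_dvd_right ⟨2, by omega⟩
  exact ⟨isLeast_pos_mul_div_eq_intCast (by omega) hcop, by push_cast; field_simp⟩

theorem stmt_3 (n : ℕ) (hn : 0 < n) (hodd : Odd n) :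
    IsLeast {l : ℕ | 0 < l ∧ ∃ k : ℤ,
        ((2 * n * (n ^ 2 + 4) * l : ℚ) / (n ^ 2 + n + 4)) = (k : ℚ)}
      ((n ^ 2 + n + 4) / 2) ∧
    (2 * n * (n ^ 2 + 4) * (((n ^ 2 + n + 4) / 2 : ℕ) : ℚ)) / (n ^ 2 + n + 4)
      = n * (n ^ 2 + 4) :=
  stmt_3_general n hodd
end

section
/- Let n be a positive integer and let M be the 2n×2n integer matrix in block form [[2n·Iₙ, B],[B, D]], where B is the n×n matrix with all entries equal to n, and D is the n×n matrix with diagonal entries n²+2n and off-diagonal entries n². Then det(M) = n^(2n)·2^(2n-2)·(n²+4). -/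
/-!
Over a field of characteristic zero the top-left block `2n • 1` is invertible, so
`det M = (2n)ⁿ · det S` for the Schur complement `S = D - (2n)⁻¹ B B = 2n • 1 + (n²/2) J`,
`J` the all-ones matrix. The matrix determinant lemma gives `det S = (2n)ⁿ (1 + n²/4)`.
The integer determinant is recovered by casting to `ℚ`.
-/

open Matrix

variable {K : Type*} [Field K] {ι κ : Type*} [Fintype ι] [DecidableEq ι] [Fintype κ] [DecidableEq κ]

theorem Matrix.det_smul_one_add_of_const {c : K} (hc : c ≠ 0) (d : K) :
    det (c • (1 : Matrix ι ι K) + of fun _ _ => d) =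
      c ^ Fintype.card ι * (1 + Fintype.card ι * d / c) := by
  have hrankOne : c • (1 : Matrix ι ι K) + (of fun _ _ => d) =
      c • ((1 : Matrix ι ι K) +
        replicateCol Unit (fun _ : ι => d / c) * replicateRow Unit (fun _ : ι => (1 : K))) := by
    ext i j
    simp [Matrix.mul_apply, mul_add, mul_div_cancel₀ _ hc]
  rw [hrankOne, det_smul, det_one_add_replicateCol_mul_replicateRow]
  simp [dotProduct, mul_div_assoc]

theorem Matrix.det_fromBlocks_smul_one₁₁ {a : K} (ha : a ≠ 0)
    (B : Matrix ι κ K) (C : Matrix κ ι K) (D : Matrix κ κ K) :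
    (fromBlocks (a • 1) B C D).det = a ^ Fintype.card ι * det (D - a⁻¹ • (C * B)) := by
  have hinv : (a⁻¹ • 1 : Matrix ι ι K) * (a • 1) = 1 := by
    rw [smul_mul_smul_comm, one_mul, inv_mul_cancel₀ ha, one_smul]
  let := invertibleOfLeftInverse _ _ hinv
  rw [det_fromBlocks₁₁, det_smul, det_one, mul_one, invOf_eq_left_inv hinv, Matrix.mul_smul,
    Matrix.smul_mul, Matrix.mul_one]

def blockMatrixM (R : Type*) [CommRing R] (n : ℕ) : Matrix (Fin n ⊕ Fin n) (Fin n ⊕ Fin n) R :=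
  fromBlocks ((2 * n : R) • 1) (of fun _ _ => (n : R)) (of fun _ _ => (n : R))
    (of fun i j => if i = j then (n ^ 2 + 2 * n : R) else (n ^ 2 : R))

theorem blockMatrixM_map {R S : Type*} [CommRing R] [CommRing S] (f : R →+* S) (n : ℕ) :
    (blockMatrixM R n).map f = blockMatrixM S n := by
  ext (i | i) (j | j) <;> by_cases h : i = j <;> simp [blockMatrixM, h, map_ofNat]

theorem det_blockMatrixM [CharZero K] {n : ℕ} (hn : 0 < n) :
    (blockMatrixM K n).det = (n : K) ^ (2 * n) * 2 ^ (2 * n - 2) * (n ^ 2 + 4) := by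
  have h2n : (2 * n : K) ≠ 0 := mul_ne_zero two_ne_zero (Nat.cast_ne_zero.2 hn.ne')
  have hschur : (of fun i j : Fin n => if i = j then (n ^ 2 + 2 * n : K) else (n ^ 2 : K)) -
      (2 * n : K)⁻¹ • ((of fun _ _ => (n : K)) * of fun _ _ => (n : K)) =
      (2 * n : K) • 1 + of fun _ _ => (n : K) ^ 2 / 2 := by
    ext i j
    simp only [Matrix.sub_apply, Matrix.add_apply, Matrix.smul_apply, of_apply, one_apply,
      Matrix.mul_apply, Finset.sum_const, Finset.card_univ, Fintype.card_fin, nsmul_eq_mul,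
      smul_eq_mul]
    split_ifs <;> field_simp <;> ring
  rw [blockMatrixM, det_fromBlocks_smul_one₁₁ h2n, hschur, det_smul_one_add_of_const h2n,
    Fintype.card_fin]
  obtain ⟨k, rfl⟩ := Nat.exists_eq_add_of_lt hn
  rw [show 2 * (0 + k + 1) - 2 = 2 * k by omega]
  field_simp
  ring

theorem stmt_4 (n : ℕ) (hn : 0 < n) :
    (Matrix.fromBlocks
        ((2 * n : ℤ) • (1 : Matrix (Fin n) (Fin n) ℤ))
        (Matrix.of fun _ _ : Fin n => (n : ℤ))
        (Matrix.of fun _ _ : Fin n => (n : ℤ))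
        (Matrix.of fun i j : Fin n => if i = j then (n ^ 2 + 2 * n : ℤ) else (n ^ 2 : ℤ))).det
      = (n : ℤ) ^ (2 * n) * 2 ^ (2 * n - 2) * (n ^ 2 + 4) := by
  apply Int.cast_injective (α := ℚ)
  rw [← blockMatrixM, Int.cast_det, ← Int.coe_castRingHom, blockMatrixM_map, det_blockMatrixM hn]
  norm_cast
end

section
/- Let n be an odd positive integer. If x, y are complex numbers with y ≠ 0 satisfying xⁿ = 1, x·y = x^(n-1)·y, and y² = 1 + y·∑_{j=1}^{n} x^j, then x = 1 and y = (n+√(n²+4))/2 or y = (n-√(n²+4))/2. -/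
theorem eq_one_of_pow_eq_one_of_eq_pow_pred {M : Type*} [Monoid M] {x : M} {n : ℕ}
    (hodd : Odd n) (h1 : x ^ n = 1) (h2 : x = x ^ (n - 1)) : x = 1 := by
  obtain ⟨k, rfl⟩ := hodd
  rw [Nat.add_sub_cancel] at h2
  have hx2 : x ^ 2 = 1 := by
    rw [sq]
    nth_rw 1 [h2]
    rw [← pow_succ, h1]
  rw [h2, pow_mul, hx2, one_pow]

theorem Complex.eq_or_eq_of_sq_eq_one_add_mul (a : ℝ) {y : ℂ} (h : y ^ 2 = 1 + a * y) :
    y = (a + Real.sqrt (a ^ 2 + 4)) / 2 ∨ y = (a - Real.sqrt (a ^ 2 + 4)) / 2 := by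
  have hdiscrim : discrim (1 : ℂ) (-a) (-1) =
      (Real.sqrt (a ^ 2 + 4) : ℂ) * (Real.sqrt (a ^ 2 + 4) : ℂ) := by
    rw [← Complex.ofReal_mul, Real.mul_self_sqrt (by positivity), discrim]
    push_cast
    ring
  have hquad : 1 * (y * y) + -(a : ℂ) * y + -1 = 0 := by
    linear_combination h
  simpa using (quadratic_eq_zero_iff one_ne_zero hdiscrim y).mp hquad

theorem stmt_16_general (n : ℕ) (hodd : Odd n) (x y : ℂ) (hy : y ≠ 0)
    (h1 : x ^ n = 1) (h2 : x * y = x ^ (n - 1) * y)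
    (h3 : y ^ 2 = 1 + y * ∑ j ∈ Finset.Icc 1 n, x ^ j) :
    x = 1 ∧ (y = ((n : ℂ) + Real.sqrt (n ^ 2 + 4)) / 2 ∨
      y = ((n : ℂ) - Real.sqrt (n ^ 2 + 4)) / 2) := by
  obtain rfl : x = 1 :=
    eq_one_of_pow_eq_one_of_eq_pow_pred hodd h1 (mul_right_cancel₀ hy h2)
  have h3' : y ^ 2 = 1 + ((n : ℝ) : ℂ) * y := by
    simpa [mul_comm] using h3
  simpa using Complex.eq_or_eq_of_sq_eq_one_add_mul n h3'

theorem stmt_16 (n : ℕ) (hn : 0 < n) (hodd : Odd n) (x y : ℂ) (hy : y ≠ 0)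
    (h1 : x ^ n = 1) (h2 : x * y = x ^ (n - 1) * y)
    (h3 : y ^ 2 = 1 + y * ∑ j ∈ Finset.Icc 1 n, x ^ j) :
    x = 1 ∧ (y = ((n : ℂ) + Real.sqrt (n ^ 2 + 4)) / 2 ∨
      y = ((n : ℂ) - Real.sqrt (n ^ 2 + 4)) / 2) :=
  stmt_16_general n hodd x y hy h1 h2 h3
end
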